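/- arXiv:1202.4622 — 5 statements merged into one kernel-verified Lean document; each statement's English description precedes it below -/
import Mathlib

section
/- The maximum of the function F(x,y) = (1-xy)^2 / (4(1+xy)(1-x)(1-y)) over the region Ω = {(x,y) : 0 ≤ x, y < 1, x + 1/y ≥ 2, 1/x + y ≥ 2} equals 1/2, and this maximum is attained at any point satisfying x + 1/y = 2 or 1/x + y = 2. -/
open Real Filter Set

/-- The function F from the paper. -/
noncomputable def Fm (x y : ℝ) : ℝ := (1 - x*y)^2 / (4*(1+x*y)*(1-x)*(1-y))

/-- The function G from the paper. -/
noncomputable def Gm (x y : ℝ) : ℝ := (x + y + 1)/4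

/-- Complete quotients of α : cq α 0 = α, cq α (n+1) = 1/{cq α n}. -/
noncomputable def cq (α : ℝ) : ℕ → ℝ
  | 0 => α
  | n+1 => (Int.fract (cq α n))⁻¹

/-- Partial quotients a_n of the continued fraction of α. -/
noncomputable def pquot (α : ℝ) (n : ℕ) : ℤ := ⌊cq α n⌋

/-- Denominators q_n of the convergents of α. -/
noncomputable def qd (α : ℝ) : ℕ → ℝ
  | 0 => 1
  | 1 => (pquot α 1 : ℝ)
  | n+2 => (pquot α (n+2) : ℝ) * qd α (n+1) + qd α n

/-- Numerators p_n of the convergents of α. -/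
noncomputable def pnum (α : ℝ) : ℕ → ℝ
  | 0 => (pquot α 0 : ℝ)
  | 1 => (pquot α 1 : ℝ) * (pquot α 0 : ℝ) + 1
  | n+2 => (pquot α (n+2) : ℝ) * pnum α (n+1) + pnum α n

/-- ξ_n = |q_n α - p_n|. -/
noncomputable def xi (α : ℝ) (n : ℕ) : ℝ := |qd α n * α - pnum α n|

/-- α*_n = [0; a_n, ..., a_1] = q_{n-1}/q_n. -/
noncomputable def astar (α : ℝ) (n : ℕ) : ℝ := qd α (n-1) / qd α n

/-- Distance from x to the nearest integer. -/
noncomputable def nidist (x : ℝ) : ℝ := |x - round x|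

/-- The ν-th convergent denominator satisfies the Legendre condition. -/
noncomputable def LegendreDen (α : ℝ) (ν : ℕ) : Prop :=
  |α - pnum α ν / qd α ν| < 1/(2 * (qd α ν)^2)

/-- ψ_α(t) = min_{1 ≤ x ≤ t} ‖xα‖. -/
noncomputable def psif (α : ℝ) (t : ℝ) : ℝ :=
  sInf {d : ℝ | ∃ x : ℤ, 1 ≤ x ∧ (x:ℝ) ≤ t ∧ d = nidist (x*α)}

/-- The region Ω (with the conventions x+y⁻¹ ≥ 2 interpreted as trivially true when y = 0,
and x⁻¹+y ≥ 2 trivially true when x = 0). -/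
def Omeg : Set (ℝ × ℝ) :=
  {p | 0 ≤ p.1 ∧ p.1 < 1 ∧ 0 ≤ p.2 ∧ p.2 < 1 ∧
    (p.2 = 0 ∨ 2 ≤ p.1 + p.2⁻¹) ∧ (p.1 = 0 ∨ 2 ≤ p.1⁻¹ + p.2)}

/-!
With `a = 1 + x y - 2 x` and `b = 1 + x y - 2 y` one has the identity
`4 (1 + x y) (1 - x) (1 - y) = 2 (1 - x y)² + 2 a b`, so `F = 1/2 - a b / (4 (1 + x y) (1 - x) (1 - y))`.
On `Ω` the two defining inequalities say exactly `a ≥ 0` and `b ≥ 0`, hence `F ≤ 1/2`,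
with equality as soon as one of them is an equality, i.e. on the two boundary curves.
-/

lemma Fm_eq_half_sub {x y : ℝ} (hD : 4 * (1 + x * y) * (1 - x) * (1 - y) ≠ 0) :
    Fm x y = 1 / 2 - (1 + x * y - 2 * x) * (1 + x * y - 2 * y) /
      (4 * (1 + x * y) * (1 - x) * (1 - y)) := by
  rw [Fm, eq_sub_iff_add_eq, ← add_div, div_eq_iff hD]
  ring

lemma eq_zero_or_two_le_add_inv_iff {x y : ℝ} (hy : 0 ≤ y) :
    (y = 0 ∨ 2 ≤ x + y⁻¹) ↔ 2 * y ≤ 1 + x * y := by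
  rcases hy.eq_or_lt with rfl | hy
  · simp
  · rw [or_iff_right hy.ne', ← mul_le_mul_iff_left₀ hy, add_mul, inv_mul_cancel₀ hy.ne']
    constructor <;> intro h <;> linarith

lemma add_inv_eq_two_iff {x y : ℝ} (hy : y ≠ 0) : x + y⁻¹ = 2 ↔ 1 + x * y - 2 * y = 0 := by
  rw [← mul_left_inj' hy, add_mul, inv_mul_cancel₀ hy, sub_eq_zero]
  constructor <;> intro h <;> linarith

lemma mem_Omeg_iff {p : ℝ × ℝ} :
    p ∈ Omeg ↔ 0 ≤ p.1 ∧ p.1 < 1 ∧ 0 ≤ p.2 ∧ p.2 < 1 ∧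
      0 ≤ 1 + p.1 * p.2 - 2 * p.2 ∧ 0 ≤ 1 + p.1 * p.2 - 2 * p.1 := by
  simp only [Omeg, mem_ofPred_eq, sub_nonneg]
  constructor
  · rintro ⟨hx0, hx1, hy0, hy1, h₁, h₂⟩
    exact ⟨hx0, hx1, hy0, hy1, (eq_zero_or_two_le_add_inv_iff hy0).1 h₁,
      mul_comm p.1 p.2 ▸ (eq_zero_or_two_le_add_inv_iff hx0).1 (add_comm p.2 _ ▸ h₂)⟩
  · rintro ⟨hx0, hx1, hy0, hy1, h₁, h₂⟩
    refine ⟨hx0, hx1, hy0, hy1, (eq_zero_or_two_le_add_inv_iff hy0).2 h₁, ?_⟩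
    rw [add_comm]
    exact (eq_zero_or_two_le_add_inv_iff hx0).2 (mul_comm p.1 p.2 ▸ h₂)

lemma four_mul_denom_pos_of_mem_Omeg {p : ℝ × ℝ} (hp : p ∈ Omeg) :
    0 < 4 * (1 + p.1 * p.2) * (1 - p.1) * (1 - p.2) := by
  obtain ⟨hx0, hx1, hy0, hy1, -, -⟩ := mem_Omeg_iff.1 hp
  have : 0 < 1 + p.1 * p.2 := by positivity
  have : 0 < 1 - p.1 := by linarith
  have : 0 < 1 - p.2 := by linarith
  positivity

lemma Fm_le_half_of_mem_Omeg {p : ℝ × ℝ} (hp : p ∈ Omeg) : Fm p.1 p.2 ≤ 1 / 2 := by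
  obtain ⟨-, -, -, -, ha, hb⟩ := mem_Omeg_iff.1 hp
  have hD := four_mul_denom_pos_of_mem_Omeg hp
  rw [Fm_eq_half_sub hD.ne']
  exact sub_le_self _ (div_nonneg (mul_nonneg hb ha) hD.le)

lemma Fm_eq_half_of_mem_Omeg {p : ℝ × ℝ} (hp : p ∈ Omeg)
    (h : (1 + p.1 * p.2 - 2 * p.1) * (1 + p.1 * p.2 - 2 * p.2) = 0) : Fm p.1 p.2 = 1 / 2 := by
  rw [Fm_eq_half_sub (four_mul_denom_pos_of_mem_Omeg hp).ne', h, zero_div, sub_zero]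

theorem stmt0 :
    IsGreatest ((fun p : ℝ × ℝ => Fm p.1 p.2) '' Omeg) (1/2) ∧
    ∀ p ∈ Omeg, (p.1 + p.2⁻¹ = 2 ∨ p.1⁻¹ + p.2 = 2) → Fm p.1 p.2 = 1/2 := by
  have hboundary : ∀ p ∈ Omeg, (p.1 + p.2⁻¹ = 2 ∨ p.1⁻¹ + p.2 = 2) → Fm p.1 p.2 = 1/2 := by
    rintro ⟨x, y⟩ hp hcurve
    obtain ⟨-, hx1, -, hy1, -, -⟩ := mem_Omeg_iff.1 hp
    refine Fm_eq_half_of_mem_Omeg hp (mul_eq_zero.2 ?_)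
    rcases hcurve with hcurve | hcurve
    · have hy : y ≠ 0 := by rintro rfl; rw [inv_zero, add_zero] at hcurve; linarith
      exact Or.inr ((add_inv_eq_two_iff hy).1 hcurve)
    · have hx : x ≠ 0 := by rintro rfl; rw [inv_zero, zero_add] at hcurve; linarith
      rw [add_comm, add_inv_eq_two_iff hx, mul_comm] at hcurve
      exact Or.inl hcurve
  have hmem : ((0 : ℝ), (1 / 2 : ℝ)) ∈ Omeg := mem_Omeg_iff.2 (by norm_num)
  refine ⟨⟨⟨_, hmem, hboundary _ hmem (Or.inl (by norm_num))⟩, ?_⟩, hboundary⟩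
  rintro _ ⟨p, hp, rfl⟩
  exact Fm_le_half_of_mem_Omeg hp
end

section
/- The minimum of the function F(x,y) = (1-xy)^2 / (4(1+xy)(1-x)(1-y)) over the region Ω = {(x,y) : 0 ≤ x, y < 1, x + 1/y ≥ 2, 1/x + y ≥ 2} equals 1/4, attained at (x,y) = (0,0). -/
open Real Filter Set

/-!
Both constraints of `Omeg` amount to `2x ≤ 1 + xy` and `2y ≤ 1 + xy`. Multiplying them by `y`
and `x` and adding gives `4xy ≤ (x + y)(1 + xy)`, which is exactly the inequality
`(1 + xy)(1 - x)(1 - y) ≤ (1 - xy)²`, i.e. `F ≥ 1/4`.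
-/

-- With `s = xy`: `(1 - s)² - (1 + s)(1 - x)(1 - y) = (1 + s)(x + y) - 4s`.
lemma one_add_mul_mul_one_sub_mul_one_sub_le_sq {x y : ℝ}
    (h : 4 * (x * y) ≤ (x + y) * (1 + x * y)) :
    (1 + x * y) * (1 - x) * (1 - y) ≤ (1 - x * y) ^ 2 := by
  linear_combination h

lemma two_mul_le_one_add_mul_of_le_add_inv {x y : ℝ} (hy : 0 ≤ y)
    (h : y = 0 ∨ 2 ≤ x + y⁻¹) : 2 * y ≤ 1 + x * y := by
  rcases h with rfl | h
  · simp
  rcases hy.eq_or_lt with rfl | hy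
  · simp
  calc 2 * y ≤ (x + y⁻¹) * y := by gcongr
    _ = 1 + x * y := by field_simp; ring

lemma one_quarter_le_Fm {x y : ℝ} (hx : 0 ≤ x) (hx1 : x < 1) (hy : 0 ≤ y) (hy1 : y < 1)
    (hxy : 2 * x ≤ 1 + y * x) (hyx : 2 * y ≤ 1 + x * y) : 1 / 4 ≤ Fm x y := by
  have hden : 0 < 4 * (1 + x * y) * (1 - x) * (1 - y) := by
    have : 0 ≤ x * y := mul_nonneg hx hy
    have : 0 < 1 - x := by linarith
    have : 0 < 1 - y := by linarith
    positivity
  have key : 4 * (x * y) ≤ (x + y) * (1 + x * y) := by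
    linear_combination y * hxy + x * hyx
  rw [Fm, le_div_iff₀ hden]
  linarith [one_add_mul_mul_one_sub_mul_one_sub_le_sq key]

lemma zero_zero_mem_Omeg : ((0 : ℝ), (0 : ℝ)) ∈ Omeg := by
  simp [Omeg]

lemma Fm_zero_zero : Fm 0 0 = 1 / 4 := by
  norm_num [Fm]

theorem stmt1 :
    IsLeast ((fun p : ℝ × ℝ => Fm p.1 p.2) '' Omeg) (1/4) ∧
    ((0:ℝ), (0:ℝ)) ∈ Omeg ∧ Fm 0 0 = 1/4 := by
  refine ⟨⟨⟨(0, 0), zero_zero_mem_Omeg, Fm_zero_zero⟩, ?_⟩, zero_zero_mem_Omeg, Fm_zero_zero⟩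
  rintro _ ⟨⟨x, y⟩, ⟨hx, hx1, hy, hy1, hyx, hxy⟩, rfl⟩
  exact one_quarter_le_Fm hx hx1 hy hy1
    (two_mul_le_one_add_mul_of_le_add_inv hx (by rwa [add_comm]))
    (two_mul_le_one_add_mul_of_le_add_inv hy hyx)
end

section
/- Let α be irrational with a_{ν+1} = 1, and define d_{1,ν}² = (q_{ν+1} - q_{ν-1})/(ξ_{ν-1} - ξ_{ν+1}) and M_{1,ν} = (1/4)(d_{1,ν} ξ_{ν-1} + q_{ν-1}/d_{1,ν})². Then M_{1,ν} = G(α*_ν, α_{ν+2}⁻¹) where G(x,y) = (x+y+1)/4. -/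
open Real Filter Set

/- For `α` irrational, write `e_n = q_n α - p_n` and `α_n` for the complete quotients. The
relation `α_{n+2} e_{n+1} = -e_n` and the determinant identity `q_{n+1} e_n - q_n e_{n+1} = ±1`
give `ξ_n = α_{n+2} ξ_{n+1}` and `(q_{n+1} α_{n+2} + q_n) ξ_{n+1} = 1`. When `a_{ν+1} = 1`, the
quantities in `d_{1,ν}²` collapse to `q_ν` and `ξ_ν`, so `d_{1,ν}² ξ_{ν-1} = q_ν α_{ν+1}` and
`M_{1,ν} = (q_ν α_{ν+1} + q_{ν-1})² ξ_ν / (4 q_ν) = (α_{ν+1} + α*_ν) / 4`, which is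
`G(α*_ν, α_{ν+2}⁻¹)` because `α_{ν+1} = 1 + α_{ν+2}⁻¹`. -/

namespace ContinuedFraction

variable {α : ℝ}

lemma irrational_cq (hα : Irrational α) : ∀ n, Irrational (cq α n)
  | 0 => hα
  | n + 1 => ((irrational_cq hα n).sub_intCast ⌊cq α n⌋).inv

lemma fract_cq_pos (hα : Irrational α) (n : ℕ) : 0 < Int.fract (cq α n) :=
  (Int.fract_nonneg _).lt_of_ne' ((irrational_cq hα n).sub_intCast ⌊cq α n⌋).ne_zero

lemma one_lt_cq_succ (hα : Irrational α) (n : ℕ) : 1 < cq α (n + 1) :=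
  (one_lt_inv₀ (fract_cq_pos hα n)).mpr (Int.fract_lt_one _)

lemma cq_succ_pos (hα : Irrational α) (n : ℕ) : 0 < cq α (n + 1) :=
  one_pos.trans (one_lt_cq_succ hα n)

lemma inv_cq_succ (α : ℝ) (n : ℕ) : (cq α (n + 1))⁻¹ = Int.fract (cq α n) :=
  inv_inv _

lemma cq_eq_pquot_add_inv (α : ℝ) (n : ℕ) : cq α n = pquot α n + (cq α (n + 1))⁻¹ := by
  rw [inv_cq_succ, pquot, Int.floor_add_fract]

lemma one_le_pquot_succ (hα : Irrational α) (n : ℕ) : 1 ≤ pquot α (n + 1) :=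
  Int.le_floor.mpr (by exact_mod_cast (one_lt_cq_succ hα n).le)

lemma qd_pos (hα : Irrational α) : ∀ n, 0 < qd α n
  | 0 => one_pos
  | 1 => by
    show (0 : ℝ) < pquot α 1
    exact_mod_cast one_pos.trans_le (one_le_pquot_succ hα 0)
  | n + 2 => by
    have ha : (1 : ℝ) ≤ pquot α (n + 2) := by exact_mod_cast one_le_pquot_succ hα (n + 1)
    show 0 < (pquot α (n + 2) : ℝ) * qd α (n + 1) + qd α n
    have := qd_pos hα (n + 1)
    have := qd_pos hα n
    positivity

noncomputable def convErr (α : ℝ) (n : ℕ) : ℝ := qd α n * α - pnum α n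

lemma convErr_zero (α : ℝ) : convErr α 0 = (cq α 1)⁻¹ := by
  rw [inv_cq_succ, convErr, qd, pnum, pquot, Int.fract, cq]
  ring

lemma convErr_one (α : ℝ) : convErr α 1 = pquot α 1 * convErr α 0 - 1 := by
  simp only [convErr, qd, pnum]
  ring

lemma convErr_add_two (α : ℝ) (n : ℕ) :
    convErr α (n + 2) = pquot α (n + 2) * convErr α (n + 1) + convErr α n := by
  simp only [convErr, qd, pnum]
  ring

lemma cq_mul_convErr_add_convErr (hα : Irrational α) :
    ∀ n, cq α (n + 2) * convErr α (n + 1) + convErr α n = 0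
  | 0 => by
    have h₁ := (cq_succ_pos hα 0).ne'
    have h₂ := (cq_succ_pos hα 1).ne'
    have h := cq_eq_pquot_add_inv α 1
    rw [convErr_one, convErr_zero]
    field_simp at h ⊢
    linear_combination -h
  | n + 1 => by
    have ih := cq_mul_convErr_add_convErr hα n
    have h₃ := (cq_succ_pos hα (n + 2)).ne'
    rw [cq_eq_pquot_add_inv α (n + 2)] at ih
    rw [convErr_add_two]
    field_simp at ih ⊢
    linear_combination ih

lemma qd_mul_convErr_sub (α : ℝ) :
    ∀ n, qd α (n + 1) * convErr α n - qd α n * convErr α (n + 1) = (-1) ^ n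
  | 0 => by
    rw [convErr_one]
    simp only [qd]
    ring
  | n + 1 => by
    rw [pow_succ, ← qd_mul_convErr_sub α n, convErr_add_two]
    simp only [qd]
    ring

lemma xi_eq_abs_convErr (α : ℝ) (n : ℕ) : xi α n = |convErr α n| := rfl

lemma xi_eq_cq_mul_xi (hα : Irrational α) (n : ℕ) : xi α n = cq α (n + 2) * xi α (n + 1) := by
  rw [xi_eq_abs_convErr, xi_eq_abs_convErr,
    eq_neg_of_add_eq_zero_right (cq_mul_convErr_add_convErr hα n), abs_neg, abs_mul,
    abs_of_pos (cq_succ_pos hα (n + 1))]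

lemma qd_mul_cq_add_qd_mul_xi (hα : Irrational α) (n : ℕ) :
    (qd α (n + 1) * cq α (n + 2) + qd α n) * xi α (n + 1) = 1 := by
  have hq : 0 < qd α (n + 1) * cq α (n + 2) + qd α n :=
    add_pos (mul_pos (qd_pos hα _) (cq_succ_pos hα _)) (qd_pos hα n)
  have hdet := qd_mul_convErr_sub α n
  rw [eq_neg_of_add_eq_zero_right (cq_mul_convErr_add_convErr hα n)] at hdet
  rw [xi_eq_abs_convErr, ← abs_of_pos hq, ← abs_mul,
    show (qd α (n + 1) * cq α (n + 2) + qd α n) * convErr α (n + 1) = -(-1) ^ n by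
      linear_combination -hdet,
    abs_neg, abs_pow, abs_neg, abs_one, one_pow]

lemma xi_succ_pos (hα : Irrational α) (n : ℕ) : 0 < xi α (n + 1) :=
  pos_of_mul_pos_right ((qd_mul_cq_add_qd_mul_xi hα n).symm ▸ one_pos)
    (add_pos (mul_pos (qd_pos hα _) (cq_succ_pos hα _)) (qd_pos hα n)).le

lemma xi_eq_pquot_mul_xi_add_xi (hα : Irrational α) (n : ℕ) :
    xi α n = pquot α (n + 2) * xi α (n + 1) + xi α (n + 2) := by
  have h := (cq_succ_pos hα (n + 2)).ne'
  rw [xi_eq_cq_mul_xi hα n, cq_eq_pquot_add_inv α (n + 2), xi_eq_cq_mul_xi hα (n + 1)]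
  field_simp

end ContinuedFraction

lemma quarter_sq_mul_add_div_eq {d q q' β ξ : ℝ} (hd : 0 < d) (hq : 0 < q)
    (hdξ : d ^ 2 * ξ = q) (hξ : (q * β + q') * ξ = 1) :
    (1 / 4) * (d * (β * ξ) + q' / d) ^ 2 = (q' / q + β) / 4 := by
  have hsum : d * (β * ξ) + q' / d = (q * β + q') / d := by
    field_simp
    linear_combination β * hdξ
  rw [hsum]
  field_simp
  linear_combination (-(q * β + q') ^ 2) * hdξ + d ^ 2 * (q * β + q') * hξ

open ContinuedFraction in
theorem stmt6 (α : ℝ) (hα : Irrational α) (ν : ℕ) (hν : 1 ≤ ν)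
    (ha : pquot α (ν+1) = 1)
    (d1 : ℝ) (hd1 : d1 = Real.sqrt ((qd α (ν+1) - qd α (ν-1)) / (xi α (ν-1) - xi α (ν+1)))) :
    (1/4) * (d1 * xi α (ν-1) + qd α (ν-1) / d1)^2 = Gm (astar α ν) (cq α (ν+2))⁻¹ := by
  obtain ⟨k, rfl⟩ : ∃ k, ν = k + 1 := ⟨ν - 1, (Nat.sub_add_cancel hν).symm⟩
  have ha' : (pquot α (k + 2) : ℝ) = 1 := by exact_mod_cast ha
  have hqd : qd α (k + 2) - qd α k = qd α (k + 1) := by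
    rw [show qd α (k + 2) = pquot α (k + 2) * qd α (k + 1) + qd α k from rfl, ha']
    ring
  have hxi : xi α k - xi α (k + 2) = xi α (k + 1) := by
    rw [xi_eq_pquot_mul_xi_add_xi hα k, ha']
    ring
  have hcq : cq α (k + 2) = 1 + (cq α (k + 3))⁻¹ := by
    rw [cq_eq_pquot_add_inv α (k + 2), ha']
  have hq := qd_pos hα (k + 1)
  have hξ := xi_succ_pos hα k
  simp only [Nat.add_sub_cancel, hqd, hxi] at hd1 ⊢
  have hd2 : d1 ^ 2 * xi α (k + 1) = qd α (k + 1) := by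
    rw [hd1, Real.sq_sqrt (div_pos hq hξ).le, div_mul_cancel₀ _ hξ.ne']
  rw [xi_eq_cq_mul_xi hα k,
    quarter_sq_mul_add_div_eq (hd1 ▸ Real.sqrt_pos.mpr (div_pos hq hξ)) hq hd2
      (qd_mul_cq_add_qd_mul_xi hα k), Gm, astar, Nat.add_sub_cancel, hcq]
  ring
end

section
/- Let α be irrational, define d_{2,ν}² = (q_{ν+1} - q_ν)/(ξ_ν - ξ_{ν+1}) and M_{2,ν} = (1/4)(d_{2,ν} ξ_ν + q_ν/d_{2,ν})². Then M_{2,ν} = F(α*_{ν+1}, α_{ν+2}⁻¹), where F(x,y) = (1-xy)²/(4(1+xy)(1-x)(1-y)). -/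
open Real Filter Set

/-!
The errors `e_n = q_n α - p_n` satisfy `e_{n+1} = -{α_{n+1}} e_n`, and together with the
determinant identity `q_{n+1} p_n - p_{n+1} q_n = (-1)^{n+1}` this gives
`ξ_{ν+1} = y ξ_ν` and `ξ_ν (q_{ν+1} + q_ν y) = 1` with `y = {α_{ν+1}} = α_{ν+2}⁻¹`.
Hence `d_{2,ν}² = (q_{ν+1} - q_ν)(q_{ν+1} + q_ν y)/(1 - y)`, and substituting into
`M_{2,ν}` leaves a rational identity in `q_ν/q_{ν+1} = α*_{ν+1}` and `y`.
-/

theorem quarter_mul_sq_eq_Fm {Q q y ξ d : ℝ} (hq : 0 ≤ q) (hqQ : q ≤ Q) (hy₀ : 0 < y)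
    (hy₁ : y < 1) (hξ : ξ * (Q + q * y) = 1) (hd : d = √((Q - q) / (ξ - y * ξ))) :
    (1 / 4) * (d * ξ + q / d) ^ 2 = Fm (q / Q) y := by
  have hQ : 0 < Q := by
    by_contra! hQ
    obtain rfl : Q = 0 := by linarith
    obtain rfl : q = 0 := by linarith
    simp at hξ
  have hS : 0 < Q + q * y := by positivity
  have hξ_eq : ξ = 1 / (Q + q * y) := by rw [eq_div_iff hS.ne', hξ]
  rcases hqQ.lt_or_eq with hlt | rfl
  · have hpos : 0 < (Q - q) / (ξ - y * ξ) := by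
      rw [hξ_eq]
      apply div_pos (by linarith)
      field_simp
      linarith
    have hd_pos : 0 < d := hd ▸ sqrt_pos.mpr hpos
    have hd_sq : d ^ 2 = (Q - q) * (Q + q * y) / (1 - y) := by
      rw [hd, sq_sqrt hpos.le, hξ_eq]
      field_simp
    have hx : q / Q < 1 := (div_lt_one hQ).mpr hlt
    have hx₁ : 1 - q / Q ≠ 0 := by linarith
    have hy₁' : 1 - y ≠ 0 := by linarith
    have hxy : 1 + q / Q * y ≠ 0 := by positivity
    rw [show d * ξ + q / d = (d ^ 2 * ξ + q) / d by field_simp, div_pow, hd_sq, hξ_eq, Fm]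
    field_simp
    ring
  · simp [hd, Fm, div_self hQ.ne']

section ContinuedFraction

variable {α : ℝ}

theorem irrational_cq (hα : Irrational α) : ∀ n, Irrational (cq α n)
  | 0 => hα
  | n + 1 => by
    show Irrational (cq α n - ⌊cq α n⌋)⁻¹
    exact ((irrational_cq hα n).sub_intCast _).inv

theorem fract_cq_pos (hα : Irrational α) (n : ℕ) : 0 < Int.fract (cq α n) :=
  Int.fract_pos.mpr ((irrational_cq hα n).ne_int _)

theorem inv_cq_succ (n : ℕ) : (cq α (n + 1))⁻¹ = Int.fract (cq α n) := inv_inv _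

theorem one_le_pquot_succ (hα : Irrational α) (n : ℕ) : (1 : ℝ) ≤ pquot α (n + 1) := by
  have h : 1 < cq α (n + 1) := (one_lt_inv₀ (fract_cq_pos hα n)).mpr (Int.fract_lt_one _)
  exact_mod_cast Int.le_floor.mpr (by exact_mod_cast h.le)

theorem one_le_qd (hα : Irrational α) : ∀ n, 1 ≤ qd α n
  | 0 => le_rfl
  | 1 => one_le_pquot_succ hα 0
  | n + 2 => by
    have := one_le_qd hα (n + 1)
    have := one_le_qd hα n
    have := one_le_pquot_succ hα (n + 1)
    simp only [qd]
    nlinarith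

theorem qd_le_qd_succ (hα : Irrational α) : ∀ n, qd α n ≤ qd α (n + 1)
  | 0 => one_le_qd hα 1
  | n + 1 => by
    have := one_le_qd hα (n + 1)
    have := one_le_qd hα n
    have := one_le_pquot_succ hα (n + 1)
    simp only [qd]
    nlinarith

theorem qd_succ_mul_pnum_sub_pnum_succ_mul_qd :
    ∀ n, qd α (n + 1) * pnum α n - pnum α (n + 1) * qd α n = (-1) ^ (n + 1)
  | 0 => by simp only [qd, pnum]; ring
  | n + 1 => by
    simp only [qd, pnum]
    linear_combination (-1 : ℝ) * qd_succ_mul_pnum_sub_pnum_succ_mul_qd n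

theorem qd_succ_mul_sub_pnum_succ (hα : Irrational α) :
    ∀ n, qd α (n + 1) * α - pnum α (n + 1) =
      -Int.fract (cq α (n + 1)) * (qd α n * α - pnum α n)
  | 0 => by
    have hf : Int.fract α ≠ 0 := (fract_cq_pos hα 0).ne'
    have hfract : Int.fract α = α - pquot α 0 := rfl
    have hfract₁ : Int.fract (cq α 1) = (Int.fract α)⁻¹ - pquot α 1 := rfl
    rw [hfract₁]
    simp only [qd, pnum]
    field_simp
    rw [hfract]
    ring
  | n + 1 => by
    have hf : Int.fract (cq α (n + 1)) ≠ 0 := (fract_cq_pos hα (n + 1)).ne'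
    have hfract :
        Int.fract (cq α (n + 2)) = (Int.fract (cq α (n + 1)))⁻¹ - pquot α (n + 2) := rfl
    have ih := qd_succ_mul_sub_pnum_succ hα n
    simp only [qd, pnum, hfract]
    field_simp
    linear_combination ih

theorem xi_succ (hα : Irrational α) (n : ℕ) :
    xi α (n + 1) = Int.fract (cq α (n + 1)) * xi α n := by
  rw [xi, xi, qd_succ_mul_sub_pnum_succ hα, abs_mul, abs_neg,
    abs_of_nonneg (Int.fract_nonneg _)]

theorem xi_mul_qd_succ_add (hα : Irrational α) (n : ℕ) :
    xi α n * (qd α (n + 1) + qd α n * Int.fract (cq α (n + 1))) = 1 := by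
  have hsigned : (qd α n * α - pnum α n) * (qd α (n + 1) + qd α n * Int.fract (cq α (n + 1)))
      = (-1) ^ n := by
    linear_combination qd α n * qd_succ_mul_sub_pnum_succ hα n
      - qd_succ_mul_pnum_sub_pnum_succ_mul_qd (α := α) n
  have hpos : 0 ≤ qd α (n + 1) + qd α n * Int.fract (cq α (n + 1)) := by
    have := one_le_qd hα n
    have := one_le_qd hα (n + 1)
    have := Int.fract_nonneg (cq α (n + 1))
    positivity
  rw [xi, ← abs_of_nonneg hpos, ← abs_mul, hsigned, abs_pow, abs_neg, abs_one, one_pow]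

end ContinuedFraction

theorem stmt7 (α : ℝ) (hα : Irrational α) (ν : ℕ)
    (d2 : ℝ) (hd2 : d2 = Real.sqrt ((qd α (ν+1) - qd α ν) / (xi α ν - xi α (ν+1)))) :
    (1/4) * (d2 * xi α ν + qd α ν / d2)^2 = Fm (astar α (ν+1)) (cq α (ν+2))⁻¹ := by
  rw [xi_succ hα] at hd2
  rw [inv_cq_succ, show astar α (ν + 1) = qd α ν / qd α (ν + 1) from rfl]
  exact quarter_mul_sq_eq_Fm (zero_le_one.trans (one_le_qd hα ν)) (qd_le_qd_succ hα ν)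
    (fract_cq_pos hα _) (Int.fract_lt_one _) (xi_mul_qd_succ_add hα ν) hd2
end

section
/- For α = (1+√5)/2 (the golden ratio) one has m(α) = 1/4 + 1/(2√5), where m(α) = limsup_{t→∞} t·μ_α(t) and μ_α is the piecewise-linear Minkowski diagonal function of α. -/
open Real Filter Set

/-! Every convergent of φ satisfies Legendre's condition, so the knots are the Fibonacci numbers
`F (n + 2)`, with `‖F (n + 2) φ‖ = φ⁻¹ ^ (n + 2)`. On each interval between consecutive knots
`t * μ t` is a concave quadratic whose vertex lies inside the interval, and by Binet's formula
(`F k * φ⁻¹ ^ k → 1 / √5`) the vertex values tend to `φ ^ 3 / (4 * √5) = 1/4 + 1/(2 * √5)`. -/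

open goldenRatio Topology

theorem exists_mem_Icc_of_tendsto_atTop {q : ℕ → ℝ} (hq : Tendsto q atTop atTop) {M : ℕ}
    {t : ℝ} (ht : q M ≤ t) : ∃ n ≥ M, t ∈ Icc (q n) (q (n + 1)) := by
  by_contra! h
  have hle : ∀ k, q (M + k) ≤ t := by
    intro k
    induction k with
    | zero => exact ht
    | succ k ih => exact le_of_not_ge fun hlt => (h (M + k) (by omega) ⟨ih, hlt⟩).elim
  obtain ⟨k, hk⟩ := (tendsto_add_atTop_iff_nat M).2 hq |>.eventually_gt_atTop t |>.exists
  exact (hle k).not_gt (add_comm k M ▸ hk)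

theorem limsup_eq_of_le_on_Icc {f : ℝ → ℝ} {q T B : ℕ → ℝ} {L : ℝ}
    (hq : Tendsto q atTop atTop) (hT : Tendsto T atTop atTop)
    (hle : ∀ n, ∀ t ∈ Icc (q n) (q (n + 1)), f t ≤ B n) (hval : ∀ n, f (T n) = B n)
    (hB : Tendsto B atTop (𝓝 L)) : limsup f atTop = L := by
  have hev : ∀ ε > 0, ∀ᶠ t in atTop, f t ≤ L + ε := by
    intro ε hε
    obtain ⟨M, hM⟩ := eventually_atTop.1 (hB.eventually_le_const (lt_add_of_pos_right L hε))
    filter_upwards [eventually_ge_atTop (q M)] with t ht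
    obtain ⟨n, hn, htn⟩ := exists_mem_Icc_of_tendsto_atTop hq ht
    exact (hle n t htn).trans (hM n hn)
  have hfT : f ∘ T = B := funext hval
  have hbdd : IsBoundedUnder (· ≤ ·) atTop f := isBoundedUnder_of_eventually_le (hev 1 one_pos)
  have hcobT : (map T atTop).IsCoboundedUnder (· ≤ ·) f := by
    simpa [IsCoboundedUnder, map_map, hfT] using hB.isCoboundedUnder_le
  have hcob : IsCoboundedUnder (· ≤ ·) atTop f := hcobT.mono (map_mono hT)
  refine le_antisymm (le_of_forall_pos_le_add fun ε hε => limsup_le_of_le hcob (hev ε hε)) ?_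
  calc L = limsup (f ∘ T) atTop := by rw [hfT, hB.limsup_eq]
    _ ≤ limsup f atTop := hT.limsup_comp_le_limsup hcobT hbdd

section Interpolation

variable (q q' x x' : ℝ)

noncomputable def interp (t : ℝ) : ℝ := (q' - t) / (q' - q) * x + (t - q) / (q' - q) * x'

noncomputable def interpPeakPoint : ℝ := (q' * x - q * x') / (2 * (x - x'))

noncomputable def interpPeak : ℝ := (q' * x - q * x') ^ 2 / (4 * (x - x') * (q' - q))

variable {q q' x x'}

theorem mul_interp_le_interpPeak (hq : q < q') (hx : x' < x) (t : ℝ) :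
    t * interp q q' x x' t ≤ interpPeak q q' x x' := by
  have hD : 0 < q' - q := sub_pos.2 hq
  have hA : 0 < x - x' := sub_pos.2 hx
  have h : t * interp q q' x x' t = t * ((q' - t) * x + (t - q) * x') / (q' - q) := by
    unfold interp; ring
  rw [h, interpPeak, div_le_div_iff₀ hD (by positivity)]
  nlinarith [mul_nonneg hD.le (sq_nonneg (q' * x - q * x' - 2 * (x - x') * t))]

theorem interpPeakPoint_mul_interp (hq : q ≠ q') (hx : x ≠ x') :
    interpPeakPoint q q' x x' * interp q q' x x' (interpPeakPoint q q' x x') =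
      interpPeak q q' x x' := by
  have hD : q' - q ≠ 0 := sub_ne_zero.2 hq.symm
  have hA : x - x' ≠ 0 := sub_ne_zero.2 hx
  unfold interp interpPeakPoint interpPeak
  field_simp
  ring

theorem interpPeakPoint_mul_right {c : ℝ} (hx : x ≠ 0) (hc : c ≠ 1) :
    interpPeakPoint q q' x (x * c) = (q' - c * q) / (2 * (1 - c)) := by
  have hc' : 1 - c ≠ 0 := sub_ne_zero.2 hc.symm
  unfold interpPeakPoint
  field_simp

theorem limsup_mul_interp_eq {q x : ℕ → ℝ} {μ : ℝ → ℝ} {L : ℝ}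
    (hq_tendsto : Tendsto q atTop atTop) (hq : StrictMono q) (hx : StrictAnti x)
    (hμ : ∀ n, ∀ t ∈ Icc (q n) (q (n + 1)), μ t = interp (q n) (q (n + 1)) (x n) (x (n + 1)) t)
    (hmem : ∀ n, interpPeakPoint (q n) (q (n + 1)) (x n) (x (n + 1)) ∈ Icc (q n) (q (n + 1)))
    (hpeak : Tendsto (fun n => interpPeak (q n) (q (n + 1)) (x n) (x (n + 1))) atTop (𝓝 L)) :
    limsup (fun t => t * μ t) atTop = L := by
  refine limsup_eq_of_le_on_Icc hq_tendsto
    (tendsto_atTop_mono (fun n => (hmem n).1) hq_tendsto) (fun n t ht => ?_) (fun n => ?_) hpeak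
  · rw [hμ n t ht]
    exact mul_interp_le_interpPeak (hq n.lt_succ_self) (hx n.lt_succ_self) t
  · rw [hμ n _ (hmem n)]
    exact interpPeakPoint_mul_interp (hq n.lt_succ_self).ne (hx n.lt_succ_self).ne'

end Interpolation

theorem floor_goldenRatio : ⌊φ⌋ = 1 := by
  rw [Int.floor_eq_iff]
  push_cast
  exact ⟨one_lt_goldenRatio.le, by linarith [goldenRatio_lt_two]⟩

theorem goldenRatio_sub_one : φ - 1 = φ⁻¹ := by
  rw [inv_goldenRatio, ← one_sub_goldenConj, neg_sub]

theorem inv_goldenRatio_lt_one : φ⁻¹ < 1 :=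
  inv_lt_one_of_one_lt₀ one_lt_goldenRatio

theorem cq_goldenRatio (n : ℕ) : cq φ n = φ := by
  induction n with
  | zero => rfl
  | succ n ih =>
    rw [cq, ih, Int.fract, floor_goldenRatio, Int.cast_one, goldenRatio_sub_one, inv_inv]

theorem pquot_goldenRatio (n : ℕ) : pquot φ n = 1 := by
  rw [pquot, cq_goldenRatio, floor_goldenRatio]

theorem qd_goldenRatio : ∀ n, qd φ n = Nat.fib (n + 1)
  | 0 => by simp [qd]
  | 1 => by simp [qd, pquot_goldenRatio]
  | n + 2 => by
    rw [qd, pquot_goldenRatio, qd_goldenRatio (n + 1), qd_goldenRatio n]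
    push_cast [Nat.fib_add_two]
    ring

theorem pnum_goldenRatio : ∀ n, pnum φ n = Nat.fib (n + 2)
  | 0 => by simp [pnum, pquot_goldenRatio]
  | 1 => by norm_num [pnum, pquot_goldenRatio, Nat.fib_add_two]
  | n + 2 => by
    rw [pnum, pquot_goldenRatio, pnum_goldenRatio (n + 1), pnum_goldenRatio n]
    push_cast [Nat.fib_add_two]
    ring

theorem abs_goldenConj : |ψ| = φ⁻¹ := by
  rw [abs_of_neg goldenConj_neg, inv_goldenRatio]

theorem two_lt_sqrt_five : (2 : ℝ) < √5 := by
  rw [lt_sqrt zero_le_two]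
  norm_num

theorem three_halves_lt_goldenRatio : 3 / 2 < φ := by
  rw [goldenRatio]
  linarith [two_lt_sqrt_five]

theorem goldenConj_sq_lt_half : ψ ^ 2 < 1 / 2 := by
  rw [goldenConj_sq, goldenConj]
  linarith [two_lt_sqrt_five]

theorem nidist_fib_mul_goldenRatio {m : ℕ} (hm : 2 ≤ m) :
    nidist (Nat.fib m * φ) = φ⁻¹ ^ m := by
  have hsmall : |ψ ^ m| < 1 / 2 := by
    rw [abs_pow]
    calc |ψ| ^ m ≤ |ψ| ^ 2 :=
          pow_le_pow_of_le_one (abs_nonneg _) (abs_goldenConj ▸ inv_goldenRatio_lt_one).le hm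
      _ = ψ ^ 2 := sq_abs ψ
      _ < 1 / 2 := goldenConj_sq_lt_half
  have hfib : (Nat.fib m : ℝ) * φ = ((Nat.fib (m + 1) : ℤ) : ℝ) + -ψ ^ m := by
    push_cast
    linear_combination -fib_succ_sub_goldenRatio_mul_fib m
  have hround : round (-ψ ^ m) = 0 := by
    rw [round_eq_zero_iff]
    constructor <;> linarith [abs_lt.1 hsmall]
  rw [nidist, hfib, round_intCast_add, hround, Int.cast_add, Int.cast_zero, add_zero,
    add_sub_cancel_left, abs_neg, abs_pow, abs_goldenConj]

theorem two_mul_fib_lt_goldenRatio_pow : ∀ m, 2 * (Nat.fib (m + 2) : ℝ) < φ ^ (m + 2)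
  | 0 => by norm_num [goldenRatio_sq]; linarith [one_lt_goldenRatio]
  | 1 => by
    norm_num [Nat.fib_add_two]
    nlinarith [goldenRatio_sq, three_halves_lt_goldenRatio]
  | m + 2 => by
    have h := add_lt_add (two_mul_fib_lt_goldenRatio_pow m) (two_mul_fib_lt_goldenRatio_pow (m + 1))
    have hpow : φ ^ (m + 2 + 2) = φ ^ (m + 2) + φ ^ (m + 1 + 2) := by
      rw [pow_add _ (m + 2) 2, goldenRatio_sq]; ring
    rw [Nat.fib_add_two (n := m + 2), hpow]
    push_cast
    linarith

theorem legendreDen_goldenRatio (k : ℕ) : LegendreDen φ (k + 1) := by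
  have hq : (0 : ℝ) < Nat.fib (k + 2) := by exact_mod_cast Nat.fib_pos.2 (by omega)
  have herr : φ - Nat.fib (k + 3) / Nat.fib (k + 2) = -ψ ^ (k + 2) / Nat.fib (k + 2) := by
    rw [eq_div_iff hq.ne', sub_mul, div_mul_cancel₀ _ hq.ne']
    linear_combination -fib_succ_sub_goldenRatio_mul_fib (k + 2)
  rw [LegendreDen, qd_goldenRatio, pnum_goldenRatio, herr, abs_div, abs_neg, abs_pow,
    abs_goldenConj, abs_of_pos hq, div_lt_div_iff₀ hq (by positivity)]
  have hcancel : φ⁻¹ ^ (k + 2) * φ ^ (k + 2) = 1 := by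
    rw [← mul_pow, inv_mul_cancel₀ goldenRatio_ne_zero, one_pow]
  calc φ⁻¹ ^ (k + 2) * (2 * Nat.fib (k + 2) ^ 2)
      = φ⁻¹ ^ (k + 2) * (2 * Nat.fib (k + 2)) * Nat.fib (k + 2) := by ring
    _ < φ⁻¹ ^ (k + 2) * φ ^ (k + 2) * Nat.fib (k + 2) := by
      gcongr
      exact two_mul_fib_lt_goldenRatio_pow k
    _ = 1 * Nat.fib (k + 2) := by rw [hcancel]

theorem goldenRatio_lt_five_thirds : φ < 5 / 3 := by
  have : √5 < 7 / 3 := by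
    rw [sqrt_lt' (by norm_num)]
    norm_num
  rw [goldenRatio]
  linarith

theorem strictMono_fib_add_two_cast : StrictMono fun n => (Nat.fib (n + 2) : ℝ) :=
  Nat.strictMono_cast.comp Nat.fib_add_two_strictMono

theorem eq_fib_of_range_legendreDen {Q : ℕ → ℝ} (hmono : StrictMono Q)
    (hmem : ∀ n, ∃ ν, Q n = qd φ ν ∧ LegendreDen φ ν)
    (hall : ∀ ν, LegendreDen φ ν → ∃ n, Q n = qd φ ν) :
    Q = fun n => (Nat.fib (n + 2) : ℝ) := by
  refine (hmono.range_inj strictMono_fib_add_two_cast).1 (Set.ext fun y => ⟨?_, ?_⟩)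
  · rintro ⟨n, rfl⟩
    obtain ⟨ν, hν, -⟩ := hmem n
    rw [hν, qd_goldenRatio]
    rcases ν with _ | k
    · exact ⟨0, rfl⟩
    · exact ⟨k, rfl⟩
  · rintro ⟨n, rfl⟩
    obtain ⟨m, hm⟩ := hall (n + 1) (legendreDen_goldenRatio n)
    exact ⟨m, by rw [hm, qd_goldenRatio]⟩

theorem tendsto_fib_mul_inv_goldenRatio_pow :
    Tendsto (fun k => (Nat.fib k : ℝ) * φ⁻¹ ^ k) atTop (𝓝 (1 / √5)) := by
  have hbinet : ∀ k, (Nat.fib k : ℝ) * φ⁻¹ ^ k = (1 - (-ψ ^ 2) ^ k) / √5 := by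
    intro k
    rw [coe_fib_eq, inv_goldenRatio, div_mul_eq_mul_div, sub_mul, ← mul_pow, ← mul_pow,
      show φ * -ψ = 1 by linear_combination -goldenRatio_mul_goldenConj, one_pow]
    ring
  have hr : |-ψ ^ 2| < 1 := by
    rw [abs_neg, abs_of_nonneg (sq_nonneg _)]
    linarith [goldenConj_sq_lt_half]
  simp only [hbinet]
  convert ((tendsto_pow_atTop_nhds_zero_of_abs_lt_one hr).const_sub 1).div_const √5 using 2
  rw [sub_zero]

theorem interpPeakPoint_fib_mem (n : ℕ) :
    interpPeakPoint (Nat.fib (n + 2)) (Nat.fib (n + 3)) (φ⁻¹ ^ (n + 2)) (φ⁻¹ ^ (n + 3)) ∈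
      Icc (Nat.fib (n + 2) : ℝ) (Nat.fib (n + 3)) := by
  have hφ := three_halves_lt_goldenRatio
  have hφ' := goldenRatio_lt_five_thirds
  have hF : (Nat.fib n : ℝ) ≤ Nat.fib (n + 1) := by exact_mod_cast Nat.fib_le_fib_succ
  have hF0 : (0 : ℝ) ≤ Nat.fib n := Nat.cast_nonneg _
  have hF2 : (Nat.fib (n + 2) : ℝ) = Nat.fib n + Nat.fib (n + 1) := by
    exact_mod_cast Nat.fib_add_two
  have hF3 : (Nat.fib (n + 3) : ℝ) = Nat.fib (n + 1) + Nat.fib (n + 2) := by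
    exact_mod_cast Nat.fib_add_two
  rw [pow_succ φ⁻¹ (n + 2), interpPeakPoint_mul_right (by positivity)
    inv_goldenRatio_lt_one.ne, ← goldenRatio_sub_one, mem_Icc,
    le_div_iff₀ (by linarith), div_le_iff₀ (by linarith), hF3, hF2]
  constructor
  · nlinarith [mul_nonneg (by linarith : (0 : ℝ) ≤ φ - 1) (sub_nonneg.2 hF),
      mul_nonneg (by linarith : (0 : ℝ) ≤ 2 * φ - 3) hF0]
  · nlinarith [mul_nonneg (by linarith : (0 : ℝ) ≤ 5 - 3 * φ) (hF0.trans hF),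
      mul_nonneg (by linarith : (0 : ℝ) ≤ 2 - φ) hF0]

theorem tendsto_interpPeak_fib :
    Tendsto (fun n => interpPeak (Nat.fib (n + 2)) (Nat.fib (n + 3)) (φ⁻¹ ^ (n + 2))
      (φ⁻¹ ^ (n + 3))) atTop (𝓝 (1 / 4 + 1 / (2 * √5))) := by
  set u : ℕ → ℝ := fun k => Nat.fib k * φ⁻¹ ^ k
  have hc0 : φ⁻¹ ≠ 0 := inv_ne_zero goldenRatio_ne_zero
  have hc1 : 1 - φ⁻¹ ≠ 0 := sub_ne_zero.2 inv_goldenRatio_lt_one.ne'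
  have hform : ∀ n, interpPeak (Nat.fib (n + 2)) (Nat.fib (n + 3)) (φ⁻¹ ^ (n + 2))
      (φ⁻¹ ^ (n + 3)) =
        (u (n + 3) / φ⁻¹ - φ⁻¹ * u (n + 2)) ^ 2 / (4 * (1 - φ⁻¹) * (φ⁻¹ * u (n + 1))) := by
    intro n
    have hF1 : (Nat.fib (n + 1) : ℝ) ≠ 0 := by exact_mod_cast (Nat.fib_pos.2 n.succ_pos).ne'
    have hF3 : (Nat.fib (n + 3) : ℝ) = Nat.fib (n + 1) + Nat.fib (n + 2) := by
      exact_mod_cast Nat.fib_add_two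
    have ha : φ⁻¹ ^ (n + 1) ≠ 0 := pow_ne_zero _ hc0
    simp only [u, interpPeak, hF3, pow_succ φ⁻¹ (n + 2), pow_succ φ⁻¹ (n + 1)]
    generalize φ⁻¹ ^ (n + 1) = a at ha ⊢
    generalize φ⁻¹ = c at hc0 hc1 ⊢
    field_simp
    ring
  have hu := tendsto_fib_mul_inv_goldenRatio_pow
  have hlim := ((((hu.comp (tendsto_add_atTop_nat 3)).div_const φ⁻¹).sub
    ((hu.comp (tendsto_add_atTop_nat 2)).const_mul φ⁻¹)).pow 2).div
    ((hu.comp (tendsto_add_atTop_nat 1)).const_mul φ⁻¹ |>.const_mul (4 * (1 - φ⁻¹)))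
    (mul_ne_zero (mul_ne_zero four_ne_zero hc1) (mul_ne_zero hc0 (by positivity)))
  have hval : (1 / √5 / φ⁻¹ - φ⁻¹ * (1 / √5)) ^ 2 / (4 * (1 - φ⁻¹) * (φ⁻¹ * (1 / √5))) =
      1 / 4 + 1 / (2 * √5) := by
    have h5 : √5 ^ 2 = 5 := sq_sqrt (by norm_num)
    have hs : 0 < √5 := by positivity
    have hc : φ⁻¹ = (√5 - 1) / 2 := by rw [inv_goldenRatio, goldenConj]; ring
    have h1 : √5 - 1 ≠ 0 := by nlinarith
    rw [hc]
    field_simp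
    rw [div_eq_iff (by nlinarith)]
    linear_combination (2 * √5 ^ 3 - 6 * √5 ^ 2 + 2 * √5 - 6) * h5
  rw [← hval]
  simp only [hform]
  exact hlim

theorem stmt15 (α : ℝ) (hα : α = (1 + Real.sqrt 5)/2)
    (Q : ℕ → ℝ) (hQmono : StrictMono Q)
    (hQmem : ∀ n, ∃ ν, Q n = qd α ν ∧ LegendreDen α ν)
    (hQall : ∀ ν, LegendreDen α ν → ∃ n, Q n = qd α ν)
    (μ : ℝ → ℝ)
    (hμ : ∀ n, ∀ t ∈ Set.Icc (Q n) (Q (n+1)),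
      μ t = ((Q (n+1) - t)/(Q (n+1) - Q n)) * nidist (Q n * α)
          + ((t - Q n)/(Q (n+1) - Q n)) * nidist (Q (n+1) * α)) :
    Filter.limsup (fun t => t * μ t) Filter.atTop = 1/4 + 1/(2 * Real.sqrt 5) := by
  obtain rfl : α = φ := hα
  obtain rfl := eq_fib_of_range_legendreDen hQmono hQmem hQall
  refine limsup_mul_interp_eq (x := fun n => φ⁻¹ ^ (n + 2))
    (tendsto_natCast_atTop_atTop.comp Nat.fib_add_two_strictMono.tendsto_atTop)
    strictMono_fib_add_two_cast
    ((pow_right_strictAnti₀ (by positivity) inv_goldenRatio_lt_one).comp_strictMono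
      (strictMono_id.add_const 2))
    (fun n t ht => ?_) interpPeakPoint_fib_mem tendsto_interpPeak_fib
  rw [hμ n t ht, nidist_fib_mul_goldenRatio (by omega), nidist_fib_mul_goldenRatio (by omega)]
  rfl
end
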